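/- arXiv:1010.3582 — 6 statements merged into one kernel-verified Lean document; each statement's English description precedes it below -/
import Mathlib

section
/- Let $K \subset \mathbb{R}^d$ be a convex body, $C = K \cap \{x : u \cdot x \geq h_K(u) - t\}$ a cap, and $\lambda \geq 1$ such that $\lambda t$ is smaller than the width of $K$ in direction $u$ (equivalently $C^\lambda \neq K$). Then $\frac{\lambda}{d} V(C) \leq V(C^\lambda)$. -/
/-!
Write `x = (s, y)` with `s = ⟪u, x⟫` and let `g s` be the volume of the slice of `K` at height `s`.
If `w ∈ K`, convexity puts a homothetic copy of the slice at height `τ`, with ratio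
`ρ = (s - w₁) / (τ - w₁)`, into the slice at height `s`, so `g s ≥ ρ ^ (d - 1) g τ`. Applying this
with `w` a top point of `K` and with `w` a point below height `h - λt` (which exists since
`C^λ ≠ K`) bounds `V(C^λ)` below by the volume of a double cone over the slice at `τ`,
truncated at height `h - λt`: `V(C^λ) ≥ (λt / d) g τ` for every `τ ∈ [h - t, h]`.
Integrating over `τ ∈ [h - t, h]` (instead of choosing the maximal slice) gives
`t V(C^λ) ≥ (λt / d) V(C)`.
-/

open MeasureTheory Module Set
open scoped RealInnerProductSpace

theorem sub_div_le_integral_div_pow {P Q : ℝ} (hQ : 0 ≤ Q) (hQP : Q ≤ P) (n : ℕ) :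
    (P - Q) / (n + 1) ≤ ∫ x in Q..P, (x / P) ^ n := by
  rcases (hQ.trans hQP).lt_or_eq' with hP | rfl
  · have hQn : Q ^ (n + 1) ≤ Q * P ^ n := by
      rw [pow_succ']
      exact mul_le_mul_of_nonneg_left (pow_le_pow_left₀ hQ hQP n) hQ
    simp_rw [div_pow]
    rw [intervalIntegral.integral_div, integral_pow, div_div,
      div_le_div_iff₀ (by positivity) (by positivity)]
    nlinarith [pow_succ P n, pow_pos hP n, Nat.cast_nonneg (α := ℝ) n]
  · obtain rfl : Q = 0 := le_antisymm hQP hQ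
    simp

theorem ofReal_integral_mul_le_setLIntegral {a b : ℝ} {C : ENNReal} {f : ℝ → ℝ}
    {g : ℝ → ENNReal} (hab : a ≤ b) (hf : Continuous f) (hg : Measurable g)
    (hf0 : ∀ s ∈ Ioc a b, 0 ≤ f s) (hfg : ∀ s ∈ Ioc a b, ENNReal.ofReal (f s) * C ≤ g s) :
    ENNReal.ofReal (∫ s in a..b, f s) * C ≤ ∫⁻ s in Ioc a b, g s := by
  rw [intervalIntegral.integral_of_le hab, ofReal_integral_eq_lintegral_ofReal
    hf.integrableOn_Ioc ((ae_restrict_iff' measurableSet_Ioc).mpr (ae_of_all _ hf0)),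
    ← lintegral_mul_const _ (by fun_prop)]
  exact setLIntegral_mono hg hfg

theorem MeasureTheory.Measure.prod_inter_fst_preimage {α β : Type*} [MeasurableSpace α]
    [MeasurableSpace β] {μ : Measure α} {ν : Measure β} [SFinite μ] [SFinite ν]
    {A : Set (α × β)} (hA : MeasurableSet A) (S : Set α) :
    μ.prod ν (A ∩ Prod.fst ⁻¹' S) = ∫⁻ s in S, ν (Prod.mk s ⁻¹' A) ∂μ := by
  rw [← prod_univ, ← Measure.restrict_apply hA, ← Measure.prod_restrict, Measure.restrict_univ,
    Measure.prod_apply hA]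

section Slices

variable {E : Type*} [NormedAddCommGroup E] [NormedSpace ℝ E] [MeasurableSpace E]
  [BorelSpace E] [FiniteDimensional ℝ E] {μ : Measure E} [μ.IsAddHaarMeasure] {A : Set (ℝ × E)}

theorem Convex.ofReal_pow_mul_measure_slice_le (hA : Convex ℝ A) {w : ℝ × E} (hw : w ∈ A)
    (τ : ℝ) {ρ : ℝ} (hρ : ρ ∈ Icc (0 : ℝ) 1) :
    ENNReal.ofReal (ρ ^ finrank ℝ E) * μ (Prod.mk τ ⁻¹' A) ≤
      μ (Prod.mk (AffineMap.lineMap w.1 τ ρ) ⁻¹' A) := by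
  have hsub : AffineMap.homothety w.2 ρ '' (Prod.mk τ ⁻¹' A) ⊆
      Prod.mk (AffineMap.lineMap w.1 τ ρ) ⁻¹' A := by
    rintro _ ⟨y, hy, rfl⟩
    have hmem := hA.lineMap_mem hw hy hρ
    rwa [AffineMap.homothety_eq_lineMap, mem_preimage]
  calc ENNReal.ofReal (ρ ^ finrank ℝ E) * μ (Prod.mk τ ⁻¹' A)
      = μ (AffineMap.homothety w.2 ρ '' (Prod.mk τ ⁻¹' A)) := by
        rw [Measure.addHaar_image_homothety, abs_of_nonneg (pow_nonneg hρ.1 _)]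
    _ ≤ _ := measure_mono hsub

theorem Convex.ofReal_mul_measure_slice_le_lintegral_below (hA : Convex ℝ A)
    (hAm : MeasurableSet A) {z : ℝ × E} (hz : z ∈ A) {α τ : ℝ} (hzα : z.1 ≤ α) (hατ : α ≤ τ)
    (hzτ : z.1 < τ) :
    ENNReal.ofReal ((τ - α) / (finrank ℝ E + 1)) * μ (Prod.mk τ ⁻¹' A) ≤
      ∫⁻ s in Ioc α τ, μ (Prod.mk s ⁻¹' A) := by
  set P := τ - z.1
  have hP : 0 < P := sub_pos.mpr hzτ
  have hint : (τ - α) / (finrank ℝ E + 1) ≤ ∫ s in α..τ, ((s - z.1) / P) ^ finrank ℝ E := by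
    rw [intervalIntegral.integral_comp_sub_right (fun x => (x / P) ^ finrank ℝ E)]
    convert sub_div_le_integral_div_pow (P := P) (sub_nonneg.mpr hzα) (by linarith) _ using 2
    ring
  refine (mul_le_mul_left (ENNReal.ofReal_le_ofReal hint) _).trans
    (ofReal_integral_mul_le_setLIntegral hατ (by fun_prop) (measurable_measure_prodMk_left hAm)
      (fun s hs => pow_nonneg (div_nonneg (by linarith [hs.1]) hP.le) _) fun s hs => ?_)
  have hρ : (s - z.1) / P ∈ Icc (0 : ℝ) 1 :=
    ⟨div_nonneg (by linarith [hs.1]) hP.le, (div_le_one hP).mpr (by linarith [hs.2])⟩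
  convert hA.ofReal_pow_mul_measure_slice_le (μ := μ) hz τ hρ using 4
  rw [AffineMap.lineMap_apply_ring']
  field_simp
  ring

theorem Convex.ofReal_mul_measure_slice_le_lintegral_above (hA : Convex ℝ A)
    (hAm : MeasurableSet A) {a : ℝ × E} (ha : a ∈ A) {τ : ℝ} (hτa : τ ≤ a.1) :
    ENNReal.ofReal ((a.1 - τ) / (finrank ℝ E + 1)) * μ (Prod.mk τ ⁻¹' A) ≤
      ∫⁻ s in Ioc τ a.1, μ (Prod.mk s ⁻¹' A) := by
  rcases hτa.eq_or_lt with rfl | hτa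
  · simp
  set D := a.1 - τ
  have hD : 0 < D := sub_pos.mpr hτa
  have hint : D / (finrank ℝ E + 1) ≤ ∫ s in τ..a.1, ((a.1 - s) / D) ^ finrank ℝ E := by
    rw [intervalIntegral.integral_comp_sub_left (fun x => (x / D) ^ finrank ℝ E), sub_self]
    simpa using sub_div_le_integral_div_pow le_rfl hD.le (finrank ℝ E)
  refine (mul_le_mul_left (ENNReal.ofReal_le_ofReal hint) _).trans
    (ofReal_integral_mul_le_setLIntegral hτa.le (by fun_prop) (measurable_measure_prodMk_left hAm)
      (fun s hs => pow_nonneg (div_nonneg (by linarith [hs.2]) hD.le) _) fun s hs => ?_)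
  have hρ : (a.1 - s) / D ∈ Icc (0 : ℝ) 1 :=
    ⟨div_nonneg (by linarith [hs.2]) hD.le, (div_le_one hD).mpr (by linarith [hs.1])⟩
  convert hA.ofReal_pow_mul_measure_slice_le (μ := μ) ha τ hρ using 4
  rw [AffineMap.lineMap_apply_ring']
  field_simp
  ring

theorem Convex.ofReal_mul_measure_slice_le_lintegral (hA : Convex ℝ A) (hAm : MeasurableSet A)
    {z a : ℝ × E} (hz : z ∈ A) (ha : a ∈ A) {α τ : ℝ} (hzα : z.1 < α) (hατ : α ≤ τ)
    (hτa : τ ≤ a.1) :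
    ENNReal.ofReal ((a.1 - α) / (finrank ℝ E + 1)) * μ (Prod.mk τ ⁻¹' A) ≤
      ∫⁻ s in Ioc α a.1, μ (Prod.mk s ⁻¹' A) := by
  have hsplit : (a.1 - α) / (finrank ℝ E + 1) =
      (τ - α) / (finrank ℝ E + 1) + (a.1 - τ) / (finrank ℝ E + 1) := by ring
  rw [hsplit, ENNReal.ofReal_add (by have := hατ; positivity) (by have := hτa; positivity),
    add_mul, ← Ioc_union_Ioc_eq_Ioc hατ hτa,
    lintegral_union measurableSet_Ioc (Ioc_disjoint_Ioc_of_le le_rfl)]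
  exact add_le_add
    (hA.ofReal_mul_measure_slice_le_lintegral_below hAm hz hzα.le hατ (hzα.trans_le hατ))
    (hA.ofReal_mul_measure_slice_le_lintegral_above hAm ha hτa)

theorem Convex.ofReal_div_mul_measure_cap_le (hA : Convex ℝ A) (hAm : MeasurableSet A)
    {h t lam : ℝ} (hmax : IsGreatest (Prod.fst '' A) h) (ht : 0 < t) (hlam : 1 ≤ lam)
    (hne : A ∩ {p | h - lam * t ≤ p.1} ≠ A) :
    ENNReal.ofReal (lam / (finrank ℝ E + 1)) *
        (volume : Measure ℝ).prod μ (A ∩ {p | h - t ≤ p.1}) ≤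
      (volume : Measure ℝ).prod μ (A ∩ {p | h - lam * t ≤ p.1}) := by
  obtain ⟨a, ha, rfl⟩ := hmax.1
  obtain ⟨z, hz, hza⟩ : ∃ z ∈ A, z.1 < a.1 - lam * t := by
    by_contra! H
    exact hne (inter_eq_left.mpr fun p hp => H p hp)
  have hcap (c : ℝ) : (volume : Measure ℝ).prod μ (A ∩ {p | c ≤ p.1}) =
      ∫⁻ s in Icc c a.1, μ (Prod.mk s ⁻¹' A) := by
    rw [← Measure.prod_inter_fst_preimage hAm]
    congr 1
    ext p
    exact and_congr_right fun hp => ⟨fun hc => ⟨hc, hmax.2 ⟨p, hp, rfl⟩⟩, And.left⟩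
  have hslice : ∀ τ ∈ Icc (a.1 - t) a.1, ENNReal.ofReal (lam * t / (finrank ℝ E + 1)) *
      μ (Prod.mk τ ⁻¹' A) ≤ (volume : Measure ℝ).prod μ (A ∩ {p | a.1 - lam * t ≤ p.1}) := by
    intro τ hτ
    rw [hcap]
    have hcone := hA.ofReal_mul_measure_slice_le_lintegral (μ := μ) hAm hz ha hza
      (by nlinarith [hτ.1]) hτ.2
    rw [sub_sub_cancel] at hcone
    exact hcone.trans (lintegral_mono_set Ioc_subset_Icc_self)
  have hmul : ENNReal.ofReal t * (ENNReal.ofReal (lam / (finrank ℝ E + 1)) *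
      (volume : Measure ℝ).prod μ (A ∩ {p | a.1 - t ≤ p.1})) ≤ ENNReal.ofReal t *
      (volume : Measure ℝ).prod μ (A ∩ {p | a.1 - lam * t ≤ p.1}) :=
    calc _ = ∫⁻ τ in Icc (a.1 - t) a.1,
          ENNReal.ofReal (lam * t / (finrank ℝ E + 1)) * μ (Prod.mk τ ⁻¹' A) := by
          rw [hcap, lintegral_const_mul _ (measurable_measure_prodMk_left hAm), ← mul_assoc,
            ← ENNReal.ofReal_mul ht.le]
          ring_nf
      _ ≤ ∫⁻ _ in Icc (a.1 - t) a.1,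
          (volume : Measure ℝ).prod μ (A ∩ {p | a.1 - lam * t ≤ p.1}) :=
          setLIntegral_mono measurable_const hslice
      _ = _ := by
          rw [setLIntegral_const, Real.volume_Icc, mul_comm]
          ring_nf
  exact (ENNReal.mul_le_mul_iff_right (by simpa using ht) ENNReal.ofReal_ne_top).mp hmul

end Slices

theorem EuclideanSpace.exists_measurePreserving_inner_eq_fst {n : ℕ}
    {u : EuclideanSpace ℝ (Fin (n + 1))} (hu : ‖u‖ = 1) :
    ∃ e : (ℝ × (Fin n → ℝ)) ≃ₗ[ℝ] EuclideanSpace ℝ (Fin (n + 1)),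
      MeasurePreserving e ∧ ∀ p, ⟪u, e p⟫ = p.1 := by
  have horth : Orthonormal ℝ (({0} : Set (Fin (n + 1))).domRestrict fun _ => u) :=
    ⟨fun _ => hu, fun i j hij => (hij (Subsingleton.elim i j)).elim⟩
  obtain ⟨b, hb⟩ := horth.exists_orthonormalBasis_extension_of_card_eq (by simp)
  have hcons : MeasurePreserving (Fin.consLinearEquiv ℝ fun _ : Fin (n + 1) => ℝ) := by
    convert (volume_preserving_piFinSuccAbove (fun _ : Fin (n + 1) => ℝ) 0).symm using 1
    ext p : 1
    exact (Fin.insertNth_zero' p.1 p.2).symm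
  refine ⟨(Fin.consLinearEquiv ℝ fun _ => ℝ).trans
      ((WithLp.linearEquiv 2 ℝ _).symm.trans b.repr.symm.toLinearEquiv),
    b.measurePreserving_repr_symm.comp ((PiLp.volume_preserving_toLp _).comp hcons), fun p => ?_⟩
  rw [← hb 0 rfl, ← b.repr_apply_apply]
  simp

theorem stmt1_general {d : ℕ} (K : Set (EuclideanSpace ℝ (Fin d)))
    (hKconv : Convex ℝ K) (hKcomp : IsCompact K)
    (u : EuclideanSpace ℝ (Fin d)) (hu : ‖u‖ = 1)
    (h : ℝ) (hsupp : IsGreatest ((fun x => ⟪u, x⟫) '' K) h)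
    (t : ℝ) (ht : 0 < t)
    (lam : ℝ) (hlam : 1 ≤ lam)
    (hne : K ∩ {x | h - lam * t ≤ ⟪u, x⟫} ≠ K) :
    ENNReal.ofReal (lam / d) * volume (K ∩ {x | h - t ≤ ⟪u, x⟫}) ≤
      volume (K ∩ {x | h - lam * t ≤ ⟪u, x⟫}) := by
  obtain _ | n := d
  · simp [Subsingleton.elim u 0] at hu
  obtain ⟨e, he, he_fst⟩ := EuclideanSpace.exists_measurePreserving_inner_eq_fst hu
  have hcap (c : ℝ) : e ⁻¹' (K ∩ {x | c ≤ ⟪u, x⟫}) = e ⁻¹' K ∩ {p | c ≤ p.1} := by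
    ext p
    simp [he_fst]
  have hvol (c : ℝ) : volume (K ∩ {x | c ≤ ⟪u, x⟫}) = volume (e ⁻¹' K ∩ {p | c ≤ p.1}) := by
    rw [← hcap, he.measure_preimage]
    exact (hKcomp.measurableSet.inter
      (measurableSet_le measurable_const (by fun_prop))).nullMeasurableSet
  have hmax : IsGreatest (Prod.fst '' (e ⁻¹' K)) h := by
    rw [← image_preimage_eq K e.surjective, image_image] at hsupp
    simpa only [he_fst] using hsupp
  have hne' : e ⁻¹' K ∩ {p | h - lam * t ≤ p.1} ≠ e ⁻¹' K := by
    rw [← hcap]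
    exact fun heq => hne (preimage_injective.mpr e.surjective heq)
  have key := (hKconv.linear_preimage e.toLinearMap).ofReal_div_mul_measure_cap_le (μ := volume)
    (hKcomp.isClosed.preimage e.continuous_of_finiteDimensional).measurableSet hmax ht hlam hne'
  rw [hvol, hvol, Measure.volume_eq_prod]
  simpa [finrank_fin_fun] using key

/-- For a convex body `K`, a cap `C = K ∩ {x : ⟪u,x⟫ ≥ h - t}` and `λ ≥ 1`
such that `C^λ ≠ K`, we have `(λ/d) V(C) ≤ V(C^λ)`. -/
theorem stmt1 {d : ℕ} (K : Set (EuclideanSpace ℝ (Fin d)))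
    (hKconv : Convex ℝ K) (hKcomp : IsCompact K) (hKint : (interior K).Nonempty)
    (u : EuclideanSpace ℝ (Fin d)) (hu : ‖u‖ = 1)
    (h : ℝ) (hsupp : IsGreatest ((fun x => ⟪u, x⟫) '' K) h)
    (t : ℝ) (ht : 0 < t)
    (lam : ℝ) (hlam : 1 ≤ lam)
    (hne : K ∩ {x | h - lam * t ≤ ⟪u, x⟫} ≠ K) :
    ENNReal.ofReal (lam / d) * volume (K ∩ {x | h - t ≤ ⟪u, x⟫}) ≤
      volume (K ∩ {x | h - lam * t ≤ ⟪u, x⟫}) :=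
  stmt1_general K hKconv hKcomp u hu h hsupp t ht lam hlam hne
end

section
/- Let $K \subset \mathbb{R}^d$ be a convex body, $C \neq K$ a cap of $K$, and $0 < \mu < 1$. Then $\mu^d V(C) \leq V(C^\mu) \leq d\mu\, V(C)$. -/
open MeasureTheory Set Module
open scoped RealInnerProductSpace ENNReal

/-!
The homothety of ratio `μ` centred at a point of `K` on the supporting hyperplane maps `C`
into `C^μ`, which gives the lower bound.

For the upper bound, slice `K` by the hyperplanes `⟪u, x⟫ = v`. For `h - t ≤ v ≤ h` the cap `C`
contains the double cone over the slice `K_v` whose apexes lie on the two hyperplanes bounding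
`C`; its volume is `t |K_v| / d`. So every slice of `C^μ` has measure at most `d V(C) / t`, and
integrating over the `μ t` levels occupied by `C^μ` gives `V(C^μ) ≤ d μ V(C)`.
-/

/-- With `f = ⟪u, ·⟫` and `h = h_K(u)` this is the cap `C`, and `cap f K h (μ * t)` is `C^μ`. -/
def cap {X : Type*} (f : X → ℝ) (K : Set X) (h t : ℝ) : Set X := K ∩ {x | h - t ≤ f x}

theorem MeasurableSet.cap {X : Type*} [MeasurableSpace X] {K : Set X} (hK : MeasurableSet K)
    {f : X → ℝ} (hf : Measurable f) (h t : ℝ) : MeasurableSet (cap f K h t) :=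
  hK.inter (measurableSet_le measurable_const hf)

theorem cap_eq_preimage {X Y : Type*} {e : X → Y} (he : Function.Injective e) {f : X → ℝ}
    {g : Y → ℝ} (hfg : ∀ x, f x = g (e x)) (K : Set X) (h t : ℝ) :
    cap f K h t = e ⁻¹' cap g (e '' K) h t := by
  ext x
  simp [cap, hfg, he.mem_set_image]

theorem homothety_image_cap_subset {E : Type*} [AddCommGroup E] [Module ℝ E] {K : Set E}
    (hK : Convex ℝ K) (f : E →ₗ[ℝ] ℝ) {x₀ : E} (hx₀ : x₀ ∈ K) {h t μ : ℝ} (hfx₀ : f x₀ = h)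
    (hμ0 : 0 ≤ μ) (hμ1 : μ ≤ 1) :
    AffineMap.homothety x₀ μ '' cap f K h t ⊆ cap f K h (μ * t) := by
  rintro _ ⟨x, ⟨hxK, hxt⟩, rfl⟩
  rw [AffineMap.homothety_eq_lineMap]
  refine ⟨hK.lineMap_mem hx₀ hxK ⟨hμ0, hμ1⟩, ?_⟩
  have hxt : h - t ≤ f x := hxt
  simp only [mem_ofPred_eq, AffineMap.lineMap_apply_module, map_add, map_smul, smul_eq_mul, hfx₀]
  nlinarith

theorem ofReal_pow_mul_measure_cap_le {E : Type*} [NormedAddCommGroup E] [NormedSpace ℝ E]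
    [MeasurableSpace E] [BorelSpace E] [FiniteDimensional ℝ E] (m : Measure E)
    [m.IsAddHaarMeasure] {K : Set E} (hK : Convex ℝ K) (f : E →ₗ[ℝ] ℝ) {x₀ : E} (hx₀ : x₀ ∈ K)
    {h t μ : ℝ} (hfx₀ : f x₀ = h) (hμ0 : 0 ≤ μ) (hμ1 : μ ≤ 1) :
    ENNReal.ofReal (μ ^ finrank ℝ E) * m (cap f K h t) ≤ m (cap f K h (μ * t)) := by
  rw [← abs_of_nonneg (pow_nonneg hμ0 _), ← Measure.addHaar_image_homothety m x₀]
  exact measure_mono (homothety_image_cap_subset hK f hx₀ hfx₀ hμ0 hμ1)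

theorem integral_pow_sub_div_sub (n : ℕ) {a b : ℝ} (hab : a ≠ b) :
    ∫ w in a..b, ((w - a) / (b - a)) ^ n = (b - a) / (n + 1) := by
  have hba : b - a ≠ 0 := sub_ne_zero.2 hab.symm
  simp_rw [sub_div _ a]
  rw [intervalIntegral.integral_comp_div_sub (fun x => x ^ n) hba, sub_self, div_sub_div_same,
    div_self hba, integral_pow, one_pow, zero_pow n.succ_ne_zero, sub_zero, smul_eq_mul,
    mul_one_div, sub_div]

theorem integral_pow_sub_div_sub' (n : ℕ) {a b : ℝ} (hab : a ≠ b) :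
    ∫ w in a..b, ((b - w) / (b - a)) ^ n = (b - a) / (n + 1) := by
  have hba : b - a ≠ 0 := sub_ne_zero.2 hab.symm
  simp_rw [sub_div b]
  rw [intervalIntegral.integral_comp_sub_div (fun x => x ^ n) hba, sub_self, div_sub_div_same,
    div_self hba, integral_pow, one_pow, zero_pow n.succ_ne_zero, sub_zero, smul_eq_mul,
    mul_one_div, sub_div]

theorem ofReal_integral_mul_le_setLIntegral_s2 {g : ℝ → ℝ} {F : ℝ → ℝ≥0∞} {a b : ℝ} (c : ℝ≥0∞)
    (hab : a ≤ b) (hg : Continuous g) (hg0 : ∀ w ∈ Ioc a b, 0 ≤ g w)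
    (hgF : ∀ w ∈ Ioc a b, ENNReal.ofReal (g w) * c ≤ F w) :
    ENNReal.ofReal (∫ w in a..b, g w) * c ≤ ∫⁻ w in Ioc a b, F w := by
  rw [intervalIntegral.integral_of_le hab, ofReal_integral_eq_lintegral_ofReal
    hg.integrableOn_Ioc ((ae_restrict_iff' measurableSet_Ioc).2 (ae_of_all _ hg0)),
    ← lintegral_mul_const _ (by fun_prop)]
  exact setLIntegral_mono' measurableSet_Ioc hgF

theorem prod_measure_le_mul_of_measure_slice_le {E : Type*} [MeasurableSpace E] {ν : Measure E}
    [SFinite ν] {S : Set (ℝ × E)} (hS : MeasurableSet S) {a b : ℝ} {B : ℝ≥0∞}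
    (hSab : ∀ p ∈ S, p.1 ∈ Icc a b) (hB : ∀ v ∈ Icc a b, ν (Prod.mk v ⁻¹' S) ≤ B) :
    volume.prod ν S ≤ B * ENNReal.ofReal (b - a) := by
  have hslice : ∀ v, ν (Prod.mk v ⁻¹' S) ≤ (Icc a b).indicator (fun _ => B) v := by
    intro v
    by_cases hv : v ∈ Icc a b
    · simpa [indicator_of_mem hv] using hB v hv
    · have : Prod.mk v ⁻¹' S = ∅ := eq_empty_of_forall_notMem fun y hy => hv (hSab _ hy)
      simp [this]
  calc volume.prod ν S = ∫⁻ v, ν (Prod.mk v ⁻¹' S) := Measure.prod_apply hS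
    _ ≤ ∫⁻ v, (Icc a b).indicator (fun _ => B) v := lintegral_mono hslice
    _ = B * ENNReal.ofReal (b - a) := by
      rw [lintegral_indicator measurableSet_Icc, setLIntegral_const, Real.volume_Icc]

theorem homothety_image_slice_subset {E : Type*} [AddCommGroup E] [Module ℝ E]
    {K : Set (ℝ × E)} {p : ℝ × E} (hK : Convex ℝ K) (hp : p ∈ K) {s : ℝ} (hs0 : 0 ≤ s)
    (hs1 : s ≤ 1) (v : ℝ) :
    AffineMap.homothety p.2 s '' (Prod.mk v ⁻¹' K) ⊆ Prod.mk (p.1 + s * (v - p.1)) ⁻¹' K := by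
  rintro _ ⟨y, hy, rfl⟩
  rw [mem_preimage]
  convert hK.lineMap_mem hp hy ⟨hs0, hs1⟩ using 1
  ext
  · simp only [AffineMap.lineMap_apply_module, Prod.fst_add, Prod.smul_fst, smul_eq_mul]
    ring
  · simp [AffineMap.homothety_eq_lineMap, AffineMap.lineMap_apply_module]

section Slices

variable {E : Type*} [NormedAddCommGroup E] [NormedSpace ℝ E] [MeasurableSpace E] [BorelSpace E]
  [FiniteDimensional ℝ E] {ν : Measure E} [ν.IsAddHaarMeasure] {K : Set (ℝ × E)} {p : ℝ × E}

theorem ofReal_pow_mul_measure_slice_le (hK : Convex ℝ K) (hp : p ∈ K) {s : ℝ} (hs0 : 0 ≤ s)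
    (hs1 : s ≤ 1) (v : ℝ) :
    ENNReal.ofReal (s ^ finrank ℝ E) * ν (Prod.mk v ⁻¹' K) ≤
      ν (Prod.mk (p.1 + s * (v - p.1)) ⁻¹' K) := by
  rw [← abs_of_nonneg (pow_nonneg hs0 _), ← Measure.addHaar_image_homothety ν p.2]
  exact measure_mono (homothety_image_slice_subset hK hp hs0 hs1 v)

theorem ofReal_mul_measure_slice_le_setLIntegral_of_le (hK : Convex ℝ K) (hp : p ∈ K) {v : ℝ}
    (hv : p.1 ≤ v) :
    ENNReal.ofReal ((v - p.1) / (finrank ℝ E + 1)) * ν (Prod.mk v ⁻¹' K) ≤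
      ∫⁻ w in Ioc p.1 v, ν (Prod.mk w ⁻¹' K) := by
  rcases hv.eq_or_lt with rfl | hlt
  · simp
  have hvp : 0 < v - p.1 := sub_pos.2 hlt
  rw [← integral_pow_sub_div_sub _ hlt.ne]
  refine ofReal_integral_mul_le_setLIntegral_s2 _ hv (by fun_prop)
    (fun w hw => by have := hw.1; positivity) fun w hw => ?_
  have hs0 : 0 ≤ (w - p.1) / (v - p.1) := div_nonneg (by linarith [hw.1]) hvp.le
  have hs1 : (w - p.1) / (v - p.1) ≤ 1 := (div_le_one hvp).2 (by linarith [hw.2])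
  convert ofReal_pow_mul_measure_slice_le (ν := ν) hK hp hs0 hs1 v using 4
  field_simp
  ring

theorem ofReal_mul_measure_slice_le_setLIntegral_of_ge (hK : Convex ℝ K) (hp : p ∈ K) {v : ℝ}
    (hv : v ≤ p.1) :
    ENNReal.ofReal ((p.1 - v) / (finrank ℝ E + 1)) * ν (Prod.mk v ⁻¹' K) ≤
      ∫⁻ w in Ioc v p.1, ν (Prod.mk w ⁻¹' K) := by
  rcases hv.eq_or_lt with rfl | hlt
  · simp
  have hpv : 0 < p.1 - v := sub_pos.2 hlt
  rw [← integral_pow_sub_div_sub' _ hlt.ne]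
  refine ofReal_integral_mul_le_setLIntegral_s2 _ hv (by fun_prop)
    (fun w hw => by have := hw.2; positivity) fun w hw => ?_
  have hs0 : 0 ≤ (p.1 - w) / (p.1 - v) := div_nonneg (by linarith [hw.2]) hpv.le
  have hs1 : (p.1 - w) / (p.1 - v) ≤ 1 := (div_le_one hpv).2 (by linarith [hw.1])
  convert ofReal_pow_mul_measure_slice_le (ν := ν) hK hp hs0 hs1 v using 4
  field_simp
  ring

/-- `K` contains the double cone over its slice at level `v` with apexes `p` and `q`. -/
theorem ofReal_mul_measure_slice_le_prod (hK : Convex ℝ K) (hKm : MeasurableSet K) {q : ℝ × E}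
    (hp : p ∈ K) (hq : q ∈ K) {v : ℝ} (hpv : p.1 ≤ v) (hvq : v ≤ q.1) :
    ENNReal.ofReal ((q.1 - p.1) / (finrank ℝ E + 1)) * ν (Prod.mk v ⁻¹' K) ≤
      volume.prod ν K := by
  calc ENNReal.ofReal ((q.1 - p.1) / (finrank ℝ E + 1)) * ν (Prod.mk v ⁻¹' K)
      = ENNReal.ofReal ((v - p.1) / (finrank ℝ E + 1)) * ν (Prod.mk v ⁻¹' K) +
          ENNReal.ofReal ((q.1 - v) / (finrank ℝ E + 1)) * ν (Prod.mk v ⁻¹' K) := by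
        rw [← add_mul, ← ENNReal.ofReal_add (by have := sub_nonneg.2 hpv; positivity)
          (by have := sub_nonneg.2 hvq; positivity)]
        ring_nf
    _ ≤ (∫⁻ w in Ioc p.1 v, ν (Prod.mk w ⁻¹' K)) + ∫⁻ w in Ioc v q.1, ν (Prod.mk w ⁻¹' K) :=
        add_le_add (ofReal_mul_measure_slice_le_setLIntegral_of_le hK hp hpv)
          (ofReal_mul_measure_slice_le_setLIntegral_of_ge hK hq hvq)
    _ = ∫⁻ w in Ioc p.1 q.1, ν (Prod.mk w ⁻¹' K) := by
        rw [← lintegral_union measurableSet_Ioc (Ioc_disjoint_Ioc_of_le le_rfl),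
          Ioc_union_Ioc_eq_Ioc hpv hvq]
    _ ≤ ∫⁻ w, ν (Prod.mk w ⁻¹' K) := setLIntegral_le_lintegral _ _
    _ = volume.prod ν K := (Measure.prod_apply hKm).symm

theorem measure_slice_le_measure_cap (hK : Convex ℝ K) (hKm : MeasurableSet K) {h t : ℝ}
    (hmax : IsGreatest (Prod.fst '' K) h) {z : ℝ × E} (hz : z ∈ K) (hzt : z.1 ≤ h - t)
    (ht : 0 < t) {v : ℝ} (hv : v ∈ Icc (h - t) h) :
    ν (Prod.mk v ⁻¹' K) ≤
      ENNReal.ofReal ((finrank ℝ E + 1) / t) * volume.prod ν (cap Prod.fst K h t) := by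
  obtain ⟨x₀, hx₀K, hx₀⟩ := hmax.1
  -- The lower apex of the double cone must lie on the bottom hyperplane of the cap.
  obtain ⟨z', hz'K, hz'⟩ : h - t ∈ Prod.fst '' K :=
    (hK.linear_image (LinearMap.fst ℝ ℝ E)).ordConnected.out ⟨z, hz, rfl⟩ hmax.1
      ⟨hzt, by linarith⟩
  have hcap : Convex ℝ (cap Prod.fst K h t) :=
    hK.inter (convex_halfSpace_ge (LinearMap.fst ℝ ℝ E).isLinear _)
  have hslice : Prod.mk v ⁻¹' cap Prod.fst K h t = Prod.mk v ⁻¹' K := by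
    ext y
    exact and_iff_left hv.1
  have hcone := ofReal_mul_measure_slice_le_prod (ν := ν) hcap (hKm.cap measurable_fst _ _)
    (p := z') (q := x₀) (v := v) ⟨hz'K, hz'.ge⟩ ⟨hx₀K, by simp [hx₀, ht.le]⟩
    (by rw [hz']; exact hv.1) (by rw [hx₀]; exact hv.2)
  rw [hslice, hz', hx₀, sub_sub_cancel] at hcone
  calc ν (Prod.mk v ⁻¹' K)
      = ENNReal.ofReal ((finrank ℝ E + 1) / t) *
          (ENNReal.ofReal (t / (finrank ℝ E + 1)) * ν (Prod.mk v ⁻¹' K)) := by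
        rw [← mul_assoc, ← ENNReal.ofReal_mul (by positivity),
          div_mul_div_cancel₀ (by positivity), div_self (by positivity), ENNReal.ofReal_one,
          one_mul]
    _ ≤ _ := mul_le_mul_right hcone _

theorem measure_cap_le_of_isGreatest (hK : Convex ℝ K) (hKm : MeasurableSet K) {h t μ : ℝ}
    (hmax : IsGreatest (Prod.fst '' K) h) {z : ℝ × E} (hz : z ∈ K) (hzt : z.1 ≤ h - t)
    (ht : 0 < t) (hμ0 : 0 ≤ μ) (hμ1 : μ ≤ 1) :
    volume.prod ν (cap Prod.fst K h (μ * t)) ≤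
      ENNReal.ofReal ((finrank ℝ E + 1) * μ) * volume.prod ν (cap Prod.fst K h t) := by
  have hslab : ∀ p ∈ cap Prod.fst K h (μ * t), p.1 ∈ Icc (h - μ * t) h :=
    fun p hp => ⟨hp.2, hmax.2 ⟨p, hp.1, rfl⟩⟩
  have hμt : μ * t ≤ t := by nlinarith
  refine (prod_measure_le_mul_of_measure_slice_le (hKm.cap measurable_fst _ _) hslab
    (B := ENNReal.ofReal ((finrank ℝ E + 1) / t) * volume.prod ν (cap Prod.fst K h t))
    fun v hv => ?_).trans_eq ?_
  · exact (measure_mono (preimage_mono inter_subset_left)).trans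
      (measure_slice_le_measure_cap hK hKm hmax hz hzt ht ⟨by linarith [hv.1], hv.2⟩)
  · rw [mul_comm, ← mul_assoc,
      ← ENNReal.ofReal_mul (sub_nonneg.2 (sub_le_self _ (by positivity)))]
    congr 2
    field_simp
    ring

end Slices

theorem exists_measurePreserving_linearEquiv_fst_eq_inner {n : ℕ}
    {u : EuclideanSpace ℝ (Fin (n + 1))} (hu : ‖u‖ = 1) :
    ∃ L : EuclideanSpace ℝ (Fin (n + 1)) ≃ₗ[ℝ] ℝ × (Fin n → ℝ),
      MeasurePreserving L ∧ ∀ x, (L x).1 = ⟪u, x⟫ := by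
  have horth : Orthonormal ℝ (({0} : Set (Fin (n + 1))).domRestrict fun _ => u) :=
    ⟨fun _ => hu, fun i j hij => absurd (Subsingleton.elim i j) hij⟩
  obtain ⟨b, hb⟩ := horth.exists_orthonormalBasis_extension_of_card_eq (by simp)
  let e := MeasurableEquiv.piFinSuccAbove (fun _ : Fin (n + 1) => ℝ) 0
  let L := b.repr.toLinearEquiv ≪≫ₗ WithLp.linearEquiv 2 ℝ (Fin (n + 1) → ℝ) ≪≫ₗ
    { e.toEquiv with map_add' := fun _ _ => rfl, map_smul' := fun _ _ => rfl }
  refine ⟨L, ?_, fun x => ?_⟩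
  · exact (volume_preserving_piFinSuccAbove (fun _ => ℝ) 0).comp
      ((EuclideanSpace.volume_preserving_symm_measurableEquiv_toLp _).comp
        b.measurePreserving_repr)
  · show b.repr x 0 = ⟪u, x⟫
    rw [b.repr_apply_apply, hb 0 rfl]

theorem volume_cap_le_mul_volume_cap {n : ℕ} {K : Set (EuclideanSpace ℝ (Fin (n + 1)))}
    (hKconv : Convex ℝ K) (hKm : MeasurableSet K) {u : EuclideanSpace ℝ (Fin (n + 1))} (hu : ‖u‖ = 1) {h t μ : ℝ}
    (hsupp : IsGreatest ((fun x => ⟪u, x⟫) '' K) h) (hCne : cap (fun x => ⟪u, x⟫) K h t ≠ K)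
    (ht : 0 < t) (hμ0 : 0 ≤ μ) (hμ1 : μ ≤ 1) :
    volume (cap (fun x => ⟪u, x⟫) K h (μ * t)) ≤
      ENNReal.ofReal ((n + 1) * μ) * volume (cap (fun x => ⟪u, x⟫) K h t) := by
  obtain ⟨L, hL, hLu⟩ := exists_measurePreserving_linearEquiv_fst_eq_inner hu
  have hK'm : MeasurableSet (L '' K) :=
    L.toContinuousLinearEquiv.toHomeomorph.toMeasurableEquiv.measurableSet_image.2 hKm
  have hvol : ∀ c, volume (cap (fun x => ⟪u, x⟫) K h c) =
      volume.prod volume (cap Prod.fst (L '' K) h c) := fun c => by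
    rw [cap_eq_preimage L.injective (g := Prod.fst) (fun x => (hLu x).symm), hL.measure_preimage
      (hK'm.cap measurable_fst _ _).nullMeasurableSet, Measure.volume_eq_prod]
  have hmax : IsGreatest (Prod.fst '' (L '' K)) h := by
    simpa only [image_image, hLu] using hsupp
  obtain ⟨z, hzK, hzt⟩ : ∃ z ∈ K, ⟪u, z⟫ < h - t := by
    by_contra! hall
    exact hCne (inter_eq_left.2 hall)
  rw [hvol, hvol]
  simpa using measure_cap_le_of_isGreatest (hKconv.linear_image L.toLinearMap) hK'm hmax
    (mem_image_of_mem L hzK) (by rw [hLu]; exact hzt.le) ht hμ0 hμ1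

theorem stmt2_general {d : ℕ} (K : Set (EuclideanSpace ℝ (Fin d)))
    (hKconv : Convex ℝ K) (hKcomp : IsCompact K)
    (u : EuclideanSpace ℝ (Fin d)) (hu : ‖u‖ = 1)
    (h : ℝ) (hsupp : IsGreatest ((fun x => ⟪u, x⟫) '' K) h)
    (t : ℝ) (ht : 0 < t)
    (hCne : K ∩ {x | h - t ≤ ⟪u, x⟫} ≠ K)
    (μ : ℝ) (hμ0 : 0 < μ) (hμ1 : μ < 1) :
    ENNReal.ofReal (μ ^ d) * volume (K ∩ {x | h - t ≤ ⟪u, x⟫}) ≤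
        volume (K ∩ {x | h - μ * t ≤ ⟪u, x⟫}) ∧
    volume (K ∩ {x | h - μ * t ≤ ⟪u, x⟫}) ≤
        ENNReal.ofReal (d * μ) * volume (K ∩ {x | h - t ≤ ⟪u, x⟫}) := by
  obtain ⟨x₀, hx₀K, hx₀⟩ := hsupp.1
  refine ⟨?_, ?_⟩
  · have := ofReal_pow_mul_measure_cap_le volume hKconv (innerₛₗ ℝ u) hx₀K hx₀ hμ0.le hμ1.le
      (t := t)
    rwa [finrank_euclideanSpace_fin] at this
  obtain ⟨n, rfl⟩ : ∃ n, d = n + 1 :=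
    Nat.exists_eq_succ_of_ne_zero (by rintro rfl; simp [Subsingleton.elim u 0] at hu)
  push_cast
  exact volume_cap_le_mul_volume_cap hKconv hKcomp.isClosed.measurableSet hu hsupp hCne ht
    hμ0.le hμ1.le

/-- For a convex body `K`, a cap `C = K ∩ {x : ⟪u,x⟫ ≥ h - t}` with `C ≠ K`,
and `0 < μ < 1`, we have `μ^d V(C) ≤ V(C^μ) ≤ dμ V(C)`. -/
theorem stmt2 {d : ℕ} (K : Set (EuclideanSpace ℝ (Fin d)))
    (hKconv : Convex ℝ K) (hKcomp : IsCompact K) (hKint : (interior K).Nonempty)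
    (u : EuclideanSpace ℝ (Fin d)) (hu : ‖u‖ = 1)
    (h : ℝ) (hsupp : IsGreatest ((fun x => ⟪u, x⟫) '' K) h)
    (t : ℝ) (ht : 0 < t)
    (hCne : K ∩ {x | h - t ≤ ⟪u, x⟫} ≠ K)
    (μ : ℝ) (hμ0 : 0 < μ) (hμ1 : μ < 1) :
    ENNReal.ofReal (μ ^ d) * volume (K ∩ {x | h - t ≤ ⟪u, x⟫}) ≤
        volume (K ∩ {x | h - μ * t ≤ ⟪u, x⟫}) ∧
    volume (K ∩ {x | h - μ * t ≤ ⟪u, x⟫}) ≤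
        ENNReal.ofReal (d * μ) * volume (K ∩ {x | h - t ≤ ⟪u, x⟫}) :=
  stmt2_general K hKconv hKcomp u hu h hsupp t ht hCne μ hμ0 hμ1
end

section
/- Let $K \subset \mathbb{R}^d$ be a convex body and $x, y \in K$. If the Macbeath regions $M(x, \tfrac{1}{2})$ and $M(y, \tfrac{1}{2})$ intersect, then $M(x,1) \subset M(y,5)$. -/
/-!
Let `p = x + w/2 = y + v/2` be a common point of `M(x, 1/2)` and `M(y, 1/2)` (so `p ∈ K`) and let
`q = x + u` lie in `M(x, 1)`. With `t = (q - y)/5`, both `y ± t` are convex combinations of points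
of `K`, hence `q = y + 5t ∈ M(y, 5)`:
`y + t = (1/5)(x + u) + (8/15) p + (4/15)(y - v)` and
`y - t = (1/5)(x - u) + (2/5)(x + w) + (2/5)(y - v)`.
-/

open MeasureTheory

/-- The Macbeath region `M(z,λ) = z + λ[(K-z) ∩ (z-K)]`. -/
def Mregion {d : ℕ} (K : Set (EuclideanSpace ℝ (Fin d)))
    (z : EuclideanSpace ℝ (Fin d)) (l : ℝ) : Set (EuclideanSpace ℝ (Fin d)) :=
  {p | ∃ w, z + w ∈ K ∧ z - w ∈ K ∧ p = z + l • w}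

theorem Convex.smul_add_smul_add_smul_mem {E : Type*} [AddCommGroup E] [Module ℝ E]
    {K : Set E} (hK : Convex ℝ K) {P Q R : E} (hP : P ∈ K) (hQ : Q ∈ K) (hR : R ∈ K)
    {a b c : ℝ} (ha : 0 ≤ a) (hb : 0 ≤ b) (hc : 0 ≤ c) (habc : a + b + c = 1) :
    a • P + b • Q + c • R ∈ K := by
  have := hK.sum_mem (t := Finset.univ) (w := ![a, b, c]) (z := ![P, Q, R])
    (by intro i _; fin_cases i <;> assumption)
    (by simp [Fin.sum_univ_three, habc])
    (by intro i _; fin_cases i <;> assumption)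
  simpa [Fin.sum_univ_three, add_assoc] using this

theorem Mregion_subset {d : ℕ} {K : Set (EuclideanSpace ℝ (Fin d))} (hK : Convex ℝ K)
    {z : EuclideanSpace ℝ (Fin d)} {l : ℝ} (hl : |l| ≤ 1) : Mregion K z l ⊆ K := by
  rintro _ ⟨w, hzw, hzw', rfl⟩
  obtain ⟨hl₁, hl₂⟩ := abs_le.mp hl
  convert hK hzw hzw' (a := (1 + l) / 2) (b := (1 - l) / 2) (by linarith) (by linarith)
    (by ring) using 1
  module

theorem mem_Mregion_iff {d : ℕ} {K : Set (EuclideanSpace ℝ (Fin d))}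
    {z q : EuclideanSpace ℝ (Fin d)} {l : ℝ} (hl : l ≠ 0) :
    q ∈ Mregion K z l ↔ z + l⁻¹ • (q - z) ∈ K ∧ z - l⁻¹ • (q - z) ∈ K := by
  constructor
  · rintro ⟨w, hzw, hzw', rfl⟩
    simpa [smul_smul, hl] using And.intro hzw hzw'
  · rintro ⟨hadd, hsub⟩
    refine ⟨l⁻¹ • (q - z), hadd, hsub, ?_⟩
    rw [smul_smul, mul_inv_cancel₀ hl, one_smul, add_sub_cancel]

theorem stmt3_general {d : ℕ} (K : Set (EuclideanSpace ℝ (Fin d)))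
    (hKconv : Convex ℝ K)
    (x y : EuclideanSpace ℝ (Fin d))
    (hmeet : (Mregion K x (1/2) ∩ Mregion K y (1/2)).Nonempty) :
    Mregion K x 1 ⊆ Mregion K y 5 := by
  obtain ⟨p, hpx, hpy⟩ := hmeet
  have hp : p ∈ K := Mregion_subset hKconv (by norm_num [abs_of_pos]) hpx
  obtain ⟨w, hxw, -, rfl⟩ := hpx
  obtain ⟨v, -, hyv, hxy⟩ := hpy
  have hy_eq : y = x + (1/2 : ℝ) • w - (1/2 : ℝ) • v := eq_sub_of_add_eq hxy.symm
  rintro _ ⟨u, hxu, hxu', rfl⟩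
  rw [mem_Mregion_iff (by norm_num)]
  constructor
  · convert hKconv.smul_add_smul_add_smul_mem hxu hp hyv (a := 1/5) (b := 8/15) (c := 4/15)
      (by norm_num) (by norm_num) (by norm_num) (by norm_num) using 1
    rw [hy_eq]; module
  · convert hKconv.smul_add_smul_add_smul_mem hxu' hxw hyv (a := 1/5) (b := 2/5) (c := 2/5)
      (by norm_num) (by norm_num) (by norm_num) (by norm_num) using 1
    rw [hy_eq]; module

/-- If `M(x,1/2) ∩ M(y,1/2) ≠ ∅` then `M(x,1) ⊆ M(y,5)`. -/
theorem stmt3 {d : ℕ} (K : Set (EuclideanSpace ℝ (Fin d)))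
    (hKconv : Convex ℝ K) (hKcomp : IsCompact K) (hKint : (interior K).Nonempty)
    (x y : EuclideanSpace ℝ (Fin d)) (hx : x ∈ K) (hy : y ∈ K)
    (hmeet : (Mregion K x (1/2) ∩ Mregion K y (1/2)).Nonempty) :
    Mregion K x 1 ⊆ Mregion K y 5 :=
  stmt3_general K hKconv x y hmeet
end

section
/- Let $K \subset \mathbb{R}^d$ be a convex body, $C$ a cap of $K$, $z \in C$, and $\lambda > 0$. Then $K \cap M(z, \lambda) \subset C^{\lambda + 1}$. -/
open scoped RealInnerProductSpace

theorem inner_add_smul_ge_of_inner_sub_le {E : Type*} [NormedAddCommGroup E]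
    [InnerProductSpace ℝ E] {u z w : E} {h t lam : ℝ}
    (hzw : ⟪u, z - w⟫ ≤ h) (hz : h - t ≤ ⟪u, z⟫) (hlam : 0 ≤ lam) :
    h - (lam + 1) * t ≤ ⟪u, z + lam • w⟫ := by
  have hw : -t ≤ ⟪u, w⟫ := by
    rw [inner_sub_right] at hzw
    linarith
  rw [inner_add_right, inner_smul_right]
  nlinarith

theorem stmt4_general {d : ℕ} (K : Set (EuclideanSpace ℝ (Fin d)))
    (u : EuclideanSpace ℝ (Fin d))
    (h : ℝ) (hsupp : IsGreatest ((fun x => ⟪u, x⟫) '' K) h)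
    (t : ℝ)
    (z : EuclideanSpace ℝ (Fin d)) (hz : z ∈ K ∩ {x | h - t ≤ ⟪u, x⟫})
    (lam : ℝ) (hlam : 0 < lam) :
    K ∩ Mregion K z lam ⊆ K ∩ {x | h - (lam + 1) * t ≤ ⟪u, x⟫} := by
  rintro p ⟨hpK, w, -, hzw, rfl⟩
  exact ⟨hpK, inner_add_smul_ge_of_inner_sub_le (hsupp.2 ⟨z - w, hzw, rfl⟩) hz.2 hlam.le⟩

/-- For a cap `C = K ∩ {x : ⟪u,x⟫ ≥ h - t}`, `z ∈ C`, and `λ > 0`,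
we have `K ∩ M(z,λ) ⊆ C^{λ+1}`. -/
theorem stmt4 {d : ℕ} (K : Set (EuclideanSpace ℝ (Fin d)))
    (hKconv : Convex ℝ K) (hKcomp : IsCompact K) (hKint : (interior K).Nonempty)
    (u : EuclideanSpace ℝ (Fin d)) (hu : ‖u‖ = 1)
    (h : ℝ) (hsupp : IsGreatest ((fun x => ⟪u, x⟫) '' K) h)
    (t : ℝ) (ht : 0 < t)
    (z : EuclideanSpace ℝ (Fin d)) (hz : z ∈ K ∩ {x | h - t ≤ ⟪u, x⟫})
    (lam : ℝ) (hlam : 0 < lam) :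
    K ∩ Mregion K z lam ⊆ K ∩ {x | h - (lam + 1) * t ≤ ⟪u, x⟫} :=
  stmt4_general K u h hsupp t z hz lam hlam
end

section
/- Let $N$ be a Poisson random variable with parameter $p > 0$. Then $\mathbb{P}(N \geq 3p) \leq \frac{3}{3-e} e^{-p}$. -/
open MeasureTheory
open scoped ProbabilityTheory

/-! For `k ≥ 3p` the Poisson weight satisfies `p^k / k! ≤ (k/3)^k / k! ≤ (e/3)^k`, using
`k^k / k! ≤ e^k` (a single term of the series of `e^k`). Bounding each atom of `{N ≥ 3p}` by
`e^{-p} (e/3)^k` and summing the geometric series gives `e^{-p} / (1 - e/3)`. -/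

open Real Nat

lemma pow_div_factorial_le_exp_one_pow (k : ℕ) : (k : ℝ) ^ k / k ! ≤ exp 1 ^ k :=
  calc (k : ℝ) ^ k / k ! ≤ exp k := pow_div_factorial_le_exp _ k.cast_nonneg k
    _ = exp 1 ^ k := by rw [← exp_nat_mul, mul_one]

lemma pow_div_factorial_le_of_mul_le {p c : ℝ} (hp : 0 ≤ p) (hc : 0 < c) {k : ℕ}
    (hk : c * p ≤ k) : p ^ k / k ! ≤ (exp 1 / c) ^ k :=
  calc p ^ k / k ! ≤ ((k : ℝ) / c) ^ k / k ! := by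
        gcongr
        rwa [le_div_iff₀' hc]
    _ = (k : ℝ) ^ k / k ! / c ^ k := by rw [div_pow, div_right_comm]
    _ ≤ exp 1 ^ k / c ^ k := by gcongr; exact pow_div_factorial_le_exp_one_pow k
    _ = (exp 1 / c) ^ k := (div_pow _ _ _).symm

lemma measure_preimage_le_tsum {Ω : Type*} [MeasurableSpace Ω] (μ : Measure Ω) (N : Ω → ℕ)
    (s : Set ℕ) (b : ℕ → ENNReal) (h : ∀ k ∈ s, μ {ω | N ω = k} ≤ b k) :
    μ (N ⁻¹' s) ≤ ∑' k, b k :=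
  calc μ (N ⁻¹' s) = μ (⋃ k ∈ s, {ω | N ω = k}) := by
        congr 1; ext ω; simp
    _ ≤ ∑' k : s, μ {ω | N ω = k} := measure_biUnion_le μ s.to_countable _
    _ ≤ ∑' k : s, b k := ENNReal.tsum_le_tsum fun k => h k k.2
    _ ≤ ∑' k, b k := ENNReal.tsum_comp_le_tsum_of_injective Subtype.val_injective b

lemma tsum_mul_exp_one_div_three_pow (a : ℝ) :
    ∑' k : ℕ, a * (exp 1 / 3) ^ k = 3 / (3 - exp 1) * a := by
  have h0 : 0 ≤ exp 1 / 3 := by positivity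
  have h1 : exp 1 / 3 < 1 := by rw [div_lt_one three_pos]; exact exp_one_lt_three
  rw [tsum_mul_left, tsum_geometric_of_lt_one h0 h1, mul_comm]
  congr 1
  have : 3 - exp 1 ≠ 0 := (sub_pos.2 exp_one_lt_three).ne'
  field_simp

theorem stmt8_general {Ω : Type*} [MeasureSpace Ω]
    (N : Ω → ℕ) (p : ℝ) (hp : 0 < p)
    (hN : ∀ k : ℕ, ℙ {ω | N ω = k} =
      ENNReal.ofReal (Real.exp (-p) * p ^ k / (Nat.factorial k))) :
    ℙ {ω | 3 * p ≤ (N ω : ℝ)} ≤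
      ENNReal.ofReal (3 / (3 - Real.exp 1) * Real.exp (-p)) := by
  have hsum : Summable fun k : ℕ => exp (-p) * (exp 1 / 3) ^ k :=
    (summable_geometric_of_lt_one (by positivity)
      ((div_lt_one three_pos).2 exp_one_lt_three)).mul_left _
  calc ℙ (N ⁻¹' {k : ℕ | 3 * p ≤ k})
      ≤ ∑' k : ℕ, ENNReal.ofReal (exp (-p) * (exp 1 / 3) ^ k) := by
        refine measure_preimage_le_tsum _ N _ _ fun k hk => ?_
        rw [hN k, mul_div_assoc]
        gcongr
        exact pow_div_factorial_le_of_mul_le hp.le three_pos hk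
    _ = ENNReal.ofReal (3 / (3 - exp 1) * exp (-p)) := by
        rw [← ENNReal.ofReal_tsum_of_nonneg (fun k => by positivity) hsum,
          tsum_mul_exp_one_div_three_pow]

/-- If `N` is Poisson with parameter `p > 0`, then
`ℙ(N ≥ 3p) ≤ (3/(3-e)) e^{-p}`. -/
theorem stmt8 {Ω : Type*} [MeasureSpace Ω] [IsProbabilityMeasure (ℙ : Measure Ω)]
    (N : Ω → ℕ) (p : ℝ) (hp : 0 < p)
    (hN : ∀ k : ℕ, ℙ {ω | N ω = k} =
      ENNReal.ofReal (Real.exp (-p) * p ^ k / (Nat.factorial k))) :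
    ℙ {ω | 3 * p ≤ (N ω : ℝ)} ≤
      ENNReal.ofReal (3 / (3 - Real.exp 1) * Real.exp (-p)) :=
  stmt8_general N p hp hN
end

section
/- Let $(\xi_\eta)$ and $(\xi'_\eta)$ be two families of real random variables indexed by $\eta$, with means $\mu_\eta, \mu'_\eta$ and variances $\sigma_\eta^2, \sigma'^2_\eta$. Suppose there are functions $\varepsilon_1(\eta), \varepsilon_2(\eta), \varepsilon_3(\eta), \varepsilon_4(\eta)$, all tending to $0$ as $\eta \to \infty$, such that: (i) $|\mu'_\eta - \mu_\eta| \leq \varepsilon_1(\eta)\,\sigma_\eta$; (ii) $|\sigma'^2_\eta - \sigma_\eta^2| \leq \varepsilon_2(\eta)\,\sigma_\eta^2$; (iii) $\sup_x |\mathbb{P}(\xi'_\eta \leq x) - \mathbb{P}(\xi_\eta \leq x)| \leq \varepsilon_3(\eta)$; (iv) $\sup_x |\mathbb{P}((\xi'_\eta - \mu'_\eta)/\sigma'_\eta \leq x) - \Phi(x)| \leq \varepsilon_4(\eta)$. Then there is a constant $c > 0$ such that for every $x$ and every $\eta$, $$\Bigl|\mathbb{P}\Bigl(\frac{\xi_\eta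 - \mu_\eta}{\sigma_\eta} \leq x\Bigr) - \Phi(x)\Bigr| \leq c \sum_{i=1}^4 \varepsilon_i(\eta).$$ -/
open MeasureTheory Filter
open scoped ProbabilityTheory

/-- The standard normal cumulative distribution function. -/
noncomputable def stdNormalCDF (x : ℝ) : ℝ :=
  ((ProbabilityTheory.gaussianReal 0 1) (Set.Iic x)).toReal

/-!
Put `y = μ + σ x`, so that `ℙ((ξ - μ)/σ ≤ x) = ℙ(ξ ≤ y)`, and `z = (y - μ')/σ'`, so that
`ℙ(ξ' ≤ y) = ℙ((ξ' - μ')/σ' ≤ z)`. Hypotheses (iii) and (iv) bound `ℙ(ξ ≤ y) - Φ(z)` by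
`ε₃ + ε₄`, and it remains to compare `Φ(z)` with `Φ(x)` through `Φ(l x)`, `l = σ/σ'`.
Since the Gaussian density is at most `1/2`, `|Φ(z) - Φ(l x)| ≤ |z - l x| = |μ - μ'|/σ' ≤ 2 ε₁`.
For `l ≥ 1/2` the density on the segment between `x` and `l x` is at most `φ(x/2)`, and
`|x| φ(x/2) ≤ 1`, so `|Φ(l x) - Φ(x)| ≤ |l - 1| ≤ 2 ε₂`. This needs `ε₂ ≤ 1/2`; otherwise the
claim is trivial because both probabilities lie in `[0, 1]`. One can take `c = 4`.
-/

open ProbabilityTheory Real Set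

lemma stdNormalCDF_nonneg (x : ℝ) : 0 ≤ stdNormalCDF x := ENNReal.toReal_nonneg

lemma stdNormalCDF_le_one (x : ℝ) : stdNormalCDF x ≤ 1 :=
  measureReal_le_one

lemma stdNormalCDF_sub_stdNormalCDF (a b : ℝ) :
    stdNormalCDF b - stdNormalCDF a = ∫ t in a..b, gaussianPDFReal 0 1 t := by
  wlog hab : a ≤ b generalizing a b
  · rw [intervalIntegral.integral_symm, ← this b a (le_of_not_ge hab)]
    ring
  have hunion :
      gaussianReal 0 1 (Iic b) = gaussianReal 0 1 (Iic a) + gaussianReal 0 1 (Ioc a b) := by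
    rw [← measure_union (Iic_disjoint_Ioc le_rfl) measurableSet_Ioc, Iic_union_Ioc_eq_Iic hab]
  rw [stdNormalCDF, stdNormalCDF, hunion,
    ENNReal.toReal_add (measure_ne_top _ _) (measure_ne_top _ _), add_sub_cancel_left,
    gaussianReal_apply_eq_integral 0 one_ne_zero, intervalIntegral.integral_of_le hab,
    ENNReal.toReal_ofReal
      (setIntegral_nonneg measurableSet_Ioc fun t _ ↦ gaussianPDFReal_nonneg 0 1 t)]

lemma abs_stdNormalCDF_sub_le {a b B : ℝ} (hB : ∀ t ∈ uIoc a b, gaussianPDFReal 0 1 t ≤ B) :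
    |stdNormalCDF b - stdNormalCDF a| ≤ B * |b - a| := by
  rw [stdNormalCDF_sub_stdNormalCDF, ← Real.norm_eq_abs]
  refine intervalIntegral.norm_integral_le_of_norm_le_const fun t ht ↦ ?_
  rw [Real.norm_of_nonneg (gaussianPDFReal_nonneg 0 1 t)]
  exact hB t ht

lemma gaussianPDFReal_zero_one (t : ℝ) :
    gaussianPDFReal 0 1 t = (√(2 * π))⁻¹ * rexp (-t ^ 2 / 2) := by
  simp [gaussianPDFReal]

lemma gaussianPDFReal_zero_one_le_of_sq_le {s t : ℝ} (h : s ^ 2 ≤ t ^ 2) :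
    gaussianPDFReal 0 1 t ≤ gaussianPDFReal 0 1 s := by
  rw [gaussianPDFReal_zero_one, gaussianPDFReal_zero_one]
  gcongr

lemma two_le_sqrt_two_mul_pi : 2 ≤ √(2 * π) := by
  rw [Real.le_sqrt (by norm_num) (by positivity)]
  nlinarith [Real.pi_gt_three]

lemma gaussianPDFReal_zero_one_le_half (t : ℝ) : gaussianPDFReal 0 1 t ≤ 1 / 2 :=
  calc gaussianPDFReal 0 1 t ≤ gaussianPDFReal 0 1 0 :=
        gaussianPDFReal_zero_one_le_of_sq_le (by simpa using sq_nonneg t)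
    _ = (√(2 * π))⁻¹ := by simp [gaussianPDFReal_zero_one]
    _ ≤ 1 / 2 := by rw [one_div]; exact inv_anti₀ two_pos two_le_sqrt_two_mul_pi

lemma abs_stdNormalCDF_sub_stdNormalCDF_le (a b : ℝ) :
    |stdNormalCDF b - stdNormalCDF a| ≤ |b - a| :=
  (abs_stdNormalCDF_sub_le fun t _ ↦ gaussianPDFReal_zero_one_le_half t).trans
    (by linarith [abs_nonneg (b - a)])

lemma abs_mul_gaussianPDFReal_zero_one_half_le_one (x : ℝ) :
    |x| * gaussianPDFReal 0 1 (x / 2) ≤ 1 := by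
  have hexp : |x| ≤ 2 * rexp (x ^ 2 / 8) := by
    nlinarith [add_one_le_exp (x ^ 2 / 8), sq_abs x, sq_nonneg (|x| - 2)]
  have hsqrt := two_le_sqrt_two_mul_pi
  rw [gaussianPDFReal_zero_one, show -(x / 2) ^ 2 / 2 = -(x ^ 2 / 8) by ring, exp_neg,
    ← mul_assoc, mul_inv_le_iff₀ (exp_pos _), mul_inv_le_iff₀ (by positivity), one_mul]
  nlinarith [exp_pos (x ^ 2 / 8)]

lemma abs_stdNormalCDF_mul_sub_le {l : ℝ} (hl : 1 / 2 ≤ l) (x : ℝ) :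
    |stdNormalCDF (l * x) - stdNormalCDF x| ≤ |l - 1| := by
  have hB : ∀ t ∈ uIoc x (l * x), gaussianPDFReal 0 1 t ≤ gaussianPDFReal 0 1 (x / 2) := by
    intro t ht
    refine gaussianPDFReal_zero_one_le_of_sq_le ?_
    rcases le_total 0 x with hx | hx
    · have : x / 2 ≤ l * x := by nlinarith
      rcases mem_uIoc.1 ht with ⟨h₁, h₂⟩ | ⟨h₁, h₂⟩ <;> nlinarith
    · have : l * x ≤ x / 2 := by nlinarith
      rcases mem_uIoc.1 ht with ⟨h₁, h₂⟩ | ⟨h₁, h₂⟩ <;> nlinarith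
  calc |stdNormalCDF (l * x) - stdNormalCDF x|
      ≤ gaussianPDFReal 0 1 (x / 2) * |l * x - x| := abs_stdNormalCDF_sub_le hB
    _ = |l - 1| * (|x| * gaussianPDFReal 0 1 (x / 2)) := by
        rw [← sub_one_mul, abs_mul]; ring
    _ ≤ |l - 1| :=
        mul_le_of_le_one_right (abs_nonneg _) (abs_mul_gaussianPDFReal_zero_one_half_le_one x)

lemma abs_sub_le_mul_of_abs_sq_sub_sq_le {s s' e : ℝ} (hs : 0 < s) (hs' : 0 ≤ s')
    (h : |s' ^ 2 - s ^ 2| ≤ e * s ^ 2) : |s' - s| ≤ e * s := by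
  refine le_of_mul_le_mul_right ?_ hs
  calc |s' - s| * s ≤ |s' - s| * (s' + s) := by gcongr; linarith
    _ = |s' ^ 2 - s ^ 2| := by
        rw [← abs_of_nonneg (by linarith : 0 ≤ s' + s), ← abs_mul]; ring_nf
    _ ≤ e * s * s := by linarith

theorem abs_comp_affine_sub_stdNormalCDF_le (F F' : ℝ → ℝ) {m m' s s' e₁ e₂ e₃ e₄ : ℝ}
    (hs : 0 < s) (hs' : 0 < s') (he₂ : e₂ ≤ 1 / 2)
    (h1 : |m' - m| ≤ e₁ * s) (h2 : |s' ^ 2 - s ^ 2| ≤ e₂ * s ^ 2)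
    (h3 : ∀ y, |F' y - F y| ≤ e₃) (h4 : ∀ z, |F' (m' + s' * z) - stdNormalCDF z| ≤ e₄)
    (x : ℝ) :
    |F (m + s * x) - stdNormalCDF x| ≤ 2 * e₁ + 2 * e₂ + e₃ + e₄ := by
  have hss := abs_le.1 (abs_sub_le_mul_of_abs_sq_sub_sq_le hs hs'.le h2)
  have he₁ : 0 ≤ e₁ := nonneg_of_mul_nonneg_left ((abs_nonneg _).trans h1) hs
  have he₂s : e₂ * s ≤ s / 2 := by nlinarith
  have hs_le : s ≤ 2 * s' := by linarith
  set z := (m + s * x - m') / s'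
  set l := s / s'
  have hz : m' + s' * z = m + s * x := by simp only [z]; field_simp; ring
  have hl : 1 / 2 ≤ l := by rw [le_div_iff₀ hs']; linarith
  have hmean : |z - l * x| ≤ 2 * e₁ := by
    rw [show z - l * x = (m - m') / s' by simp only [z, l]; field_simp; ring, abs_div,
      abs_of_pos hs', div_le_iff₀ hs', abs_sub_comm]
    nlinarith [mul_le_mul_of_nonneg_left hs_le he₁]
  have hscale : |l - 1| ≤ 2 * e₂ := by
    rw [show l - 1 = (s - s') / s' by simp only [l]; field_simp, abs_div, abs_of_pos hs',
      div_le_iff₀ hs', abs_le]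
    constructor <;> nlinarith
  have e₃' := h3 (m + s * x)
  have e₄' := h4 z
  rw [hz] at e₄'
  have e₁' := (abs_stdNormalCDF_sub_stdNormalCDF_le (l * x) z).trans hmean
  have e₂' := (abs_stdNormalCDF_mul_sub_le hl x).trans hscale
  rw [abs_le] at *
  constructor <;> linarith

lemma setOf_sub_div_le_eq {Ω : Type*} (X : Ω → ℝ) {m s : ℝ} (hs : 0 < s) (x : ℝ) :
    {ω | (X ω - m) / s ≤ x} = {ω | X ω ≤ m + s * x} := by
  ext ω
  exact (div_le_iff₀ hs).trans (by rw [sub_le_iff_le_add', mul_comm]; rfl)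

theorem abs_prob_standardized_le_sub_stdNormalCDF_le {Ω : Type*} [MeasureSpace Ω]
    [IsProbabilityMeasure (ℙ : Measure Ω)] (X X' : Ω → ℝ) {m m' s s' e₁ e₂ e₃ e₄ : ℝ}
    (hs : 0 < s) (hs' : 0 < s') (h1 : |m' - m| ≤ e₁ * s) (h2 : |s' ^ 2 - s ^ 2| ≤ e₂ * s ^ 2)
    (h3 : ∀ y, |(ℙ {ω | X' ω ≤ y}).toReal - (ℙ {ω | X ω ≤ y}).toReal| ≤ e₃)
    (h4 : ∀ z, |(ℙ {ω | (X' ω - m') / s' ≤ z}).toReal - stdNormalCDF z| ≤ e₄) (x : ℝ) :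
    |(ℙ {ω | (X ω - m) / s ≤ x}).toReal - stdNormalCDF x| ≤ 4 * (e₁ + e₂ + e₃ + e₄) := by
  have he₁ : 0 ≤ e₁ := nonneg_of_mul_nonneg_left ((abs_nonneg _).trans h1) hs
  have he₂ : 0 ≤ e₂ := nonneg_of_mul_nonneg_left ((abs_nonneg _).trans h2) (by positivity)
  have he₃ : 0 ≤ e₃ := (abs_nonneg _).trans (h3 0)
  have he₄ : 0 ≤ e₄ := (abs_nonneg _).trans (h4 0)
  rw [setOf_sub_div_le_eq X hs]
  rcases le_or_gt e₂ (1 / 2) with he₂_small | he₂_large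
  · have := abs_comp_affine_sub_stdNormalCDF_le (fun y ↦ (ℙ {ω | X ω ≤ y}).toReal)
      (fun y ↦ (ℙ {ω | X' ω ≤ y}).toReal) hs hs' he₂_small h1 h2 h3
      (fun z ↦ by simpa only [setOf_sub_div_le_eq X' hs'] using h4 z) x
    linarith
  · have : |(ℙ {ω | X ω ≤ m + s * x}).toReal - stdNormalCDF x| ≤ 1 :=
      abs_sub_le_of_nonneg_of_le ENNReal.toReal_nonneg measureReal_le_one
        (stdNormalCDF_nonneg x) (stdNormalCDF_le_one x)
    linarith

theorem stmt10_general {Ω : Type*} [MeasureSpace Ω] [IsProbabilityMeasure (ℙ : Measure Ω)]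
    (ξ ξ' : ℕ → Ω → ℝ) (μ μ' σ σ' : ℕ → ℝ)
    (hσ : ∀ η, 0 < σ η) (hσ' : ∀ η, 0 < σ' η)
    (ε₁ ε₂ ε₃ ε₄ : ℕ → ℝ)
    (h1 : ∀ η, |μ' η - μ η| ≤ ε₁ η * σ η)
    (h2 : ∀ η, |(σ' η) ^ 2 - (σ η) ^ 2| ≤ ε₂ η * (σ η) ^ 2)
    (h3 : ∀ η x, |(ℙ {ω | ξ' η ω ≤ x}).toReal - (ℙ {ω | ξ η ω ≤ x}).toReal| ≤ ε₃ η)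
    (h4 : ∀ η x, |(ℙ {ω | (ξ' η ω - μ' η) / σ' η ≤ x}).toReal - stdNormalCDF x| ≤ ε₄ η) :
    ∃ c > 0, ∀ η x,
      |(ℙ {ω | (ξ η ω - μ η) / σ η ≤ x}).toReal - stdNormalCDF x| ≤
        c * (ε₁ η + ε₂ η + ε₃ η + ε₄ η) :=
  ⟨4, by norm_num, fun η x ↦ abs_prob_standardized_le_sub_stdNormalCDF_le (ξ η) (ξ' η)
    (hσ η) (hσ' η) (h1 η) (h2 η) (h3 η) (h4 η) x⟩

/-- transference lemma: if `ξ'_η` satisfies a quantitative CLT and `ξ_η` is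
close to `ξ'_η` in mean, variance and distribution, then `ξ_η` satisfies a quantitative CLT. -/
theorem stmt10 {Ω : Type*} [MeasureSpace Ω] [IsProbabilityMeasure (ℙ : Measure Ω)]
    (ξ ξ' : ℕ → Ω → ℝ) (μ μ' σ σ' : ℕ → ℝ)
    (hσ : ∀ η, 0 < σ η) (hσ' : ∀ η, 0 < σ' η)
    (hμ : ∀ η, μ η = ∫ ω, ξ η ω) (hμ' : ∀ η, μ' η = ∫ ω, ξ' η ω)
    (hvar : ∀ η, (σ η) ^ 2 = ProbabilityTheory.variance (ξ η) ℙ)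
    (hvar' : ∀ η, (σ' η) ^ 2 = ProbabilityTheory.variance (ξ' η) ℙ)
    (ε₁ ε₂ ε₃ ε₄ : ℕ → ℝ)
    (hε₁ : Tendsto ε₁ atTop (nhds 0)) (hε₂ : Tendsto ε₂ atTop (nhds 0))
    (hε₃ : Tendsto ε₃ atTop (nhds 0)) (hε₄ : Tendsto ε₄ atTop (nhds 0))
    (h1 : ∀ η, |μ' η - μ η| ≤ ε₁ η * σ η)
    (h2 : ∀ η, |(σ' η) ^ 2 - (σ η) ^ 2| ≤ ε₂ η * (σ η) ^ 2)
    (h3 : ∀ η x, |(ℙ {ω | ξ' η ω ≤ x}).toReal - (ℙ {ω | ξ η ω ≤ x}).toReal| ≤ ε₃ η)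
    (h4 : ∀ η x, |(ℙ {ω | (ξ' η ω - μ' η) / σ' η ≤ x}).toReal - stdNormalCDF x| ≤ ε₄ η) :
    ∃ c > 0, ∀ η x,
      |(ℙ {ω | (ξ η ω - μ η) / σ η ≤ x}).toReal - stdNormalCDF x| ≤
        c * (ε₁ η + ε₂ η + ε₃ η + ε₄ η) :=
  stmt10_general ξ ξ' μ μ' σ σ' hσ hσ' ε₁ ε₂ ε₃ ε₄ h1 h2 h3 h4
end
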